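/- Let Φ be as given. Then Φ(x)/log x → 2π/(3√3) as x → +∞, and Φ(x)/log x → −2π/(3√3) as x → 0⁺. -/

import Mathlib

open Set Filter Topology

noncomputable def ggfun (x : ℝ) : ℝ :=
  2 / Real.sqrt 3 * (Real.arctan ((2*x - 1)/Real.sqrt 3) - Real.pi/6)

lemma s3pos : (0:ℝ) < Real.sqrt 3 := Real.sqrt_pos.mpr (by norm_num)

lemma sq_s3 : Real.sqrt 3 ^ 2 = 3 := Real.sq_sqrt (by norm_num)

lemma qpos (x : ℝ) : 0 < 1 - x + x ^ 2 := by nlinarith [sq_nonneg (2*x - 1)]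

lemma arctan_lip (a b : ℝ) : |Real.arctan a - Real.arctan b| ≤ |a - b| := by
  have hL : LipschitzWith 1 Real.arctan := by
    apply lipschitzWith_of_nnnorm_deriv_le Real.differentiable_arctan
    intro x
    have h : ‖deriv Real.arctan x‖ ≤ (1:ℝ) := by
      rw [Real.deriv_arctan, Real.norm_eq_abs, abs_of_pos (by positivity)]
      rw [div_le_one (by positivity)]
      nlinarith [sq_nonneg x]
    exact_mod_cast h
  have := hL.dist_le_mul a b
  simpa [Real.dist_eq] using this

lemma arctan_le_self' {y : ℝ} (hy : 0 ≤ y) : Real.arctan y ≤ y := by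
  have h := arctan_lip y 0
  simp [Real.arctan_zero] at h
  calc Real.arctan y ≤ |Real.arctan y| := le_abs_self _
    _ ≤ |y| := h
    _ = y := abs_of_nonneg hy

lemma arctan_one_div_s3 : Real.arctan (1 / Real.sqrt 3) = Real.pi / 6 := by
  rw [← Real.tan_pi_div_six]
  exact Real.arctan_tan (by linarith [Real.pi_pos]) (by linarith [Real.pi_pos])

lemma gg_hasDeriv (x : ℝ) : HasDerivAt ggfun (1 / (1 - x + x ^ 2)) x := by
  have h1 : HasDerivAt (fun y : ℝ => (2*y - 1)/Real.sqrt 3) (2/Real.sqrt 3) x := by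
    simpa using (((hasDerivAt_id x).const_mul 2).sub_const 1).div_const (Real.sqrt 3)
  have h2 := (Real.hasDerivAt_arctan ((2*x - 1)/Real.sqrt 3)).comp x h1
  have h3 := (h2.sub_const (Real.pi/6)).const_mul (2/Real.sqrt 3)
  refine HasDerivAt.congr_deriv (f := ggfun) h3 ?_
  symm
  have h4 := sq_s3
  have h5 := s3pos
  have h6 := qpos x
  have h7 : (0:ℝ) < 1 + ((2*x - 1)/Real.sqrt 3) ^ 2 := by positivity
  field_simp
  nlinarith [sq_nonneg (2*x-1)]

lemma gg_cont : Continuous ggfun := by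
  unfold ggfun
  exact continuous_const.mul ((Real.continuous_arctan.comp (by fun_prop)).sub continuous_const)

lemma gg_one : ggfun 1 = 0 := by
  unfold ggfun
  rw [show (2*(1:ℝ)-1)/Real.sqrt 3 = 1/Real.sqrt 3 by norm_num, arctan_one_div_s3]
  ring

lemma L_eq : 2 * Real.pi / (3 * Real.sqrt 3) = 2 / Real.sqrt 3 * (Real.pi/2 - Real.pi/6) := by
  have := s3pos
  field_simp
  ring

lemma gg_le_L (t : ℝ) : ggfun t ≤ 2 * Real.pi / (3 * Real.sqrt 3) := by
  rw [L_eq]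
  unfold ggfun
  have h := Real.arctan_lt_pi_div_two ((2*t - 1)/Real.sqrt 3)
  have h5 := s3pos
  apply mul_le_mul_of_nonneg_left (by linarith) (by positivity)

lemma L_sub_gg_le (t : ℝ) (ht : 1 ≤ t) :
    2 * Real.pi / (3 * Real.sqrt 3) - ggfun t ≤ 2 / t := by
  have h5 := s3pos
  set u := (2*t - 1)/Real.sqrt 3 with hu_def
  have hu : 0 < u := div_pos (by linarith) h5
  have h1 : Real.pi/2 - Real.arctan u ≤ u⁻¹ := by
    rw [← Real.arctan_inv_of_pos hu]
    exact arctan_le_self' (by positivity)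
  have hEq : 2 * Real.pi / (3 * Real.sqrt 3) - ggfun t
      = 2/Real.sqrt 3 * (Real.pi/2 - Real.arctan u) := by
    rw [L_eq]; unfold ggfun; rw [← hu_def]; ring
  rw [hEq]
  have h2 : 2/Real.sqrt 3 * (Real.pi/2 - Real.arctan u) ≤ 2/Real.sqrt 3 * u⁻¹ :=
    mul_le_mul_of_nonneg_left h1 (by positivity)
  have h3 : 2/Real.sqrt 3 * u⁻¹ = 2/(2*t-1) := by
    rw [hu_def]
    have h4 := sq_s3
    field_simp
  have h6 : 2/(2*t-1) ≤ 2/t := by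
    apply div_le_div_of_nonneg_left (by norm_num) (by linarith) (by linarith)
  linarith

lemma gg_add_L_abs (t : ℝ) (ht : 0 < t) :
    |ggfun t + 2 * Real.pi / (3 * Real.sqrt 3)| ≤ 4 * t / 3 := by
  have h5 := s3pos
  have h4 := sq_s3
  have hneg : Real.arctan (-(1/Real.sqrt 3)) = -(Real.pi/6) := by
    rw [Real.arctan_neg, arctan_one_div_s3]
  have key := arctan_lip ((2*t-1)/Real.sqrt 3) (-(1/Real.sqrt 3))
  rw [hneg] at key
  have harg : (2*t-1)/Real.sqrt 3 - (-(1/Real.sqrt 3)) = 2*t/Real.sqrt 3 := by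
    field_simp
    ring
  rw [harg] at key
  have hEq : ggfun t + 2 * Real.pi / (3 * Real.sqrt 3)
      = 2/Real.sqrt 3 * (Real.arctan ((2*t-1)/Real.sqrt 3) - -(Real.pi/6)) := by
    rw [L_eq]; unfold ggfun; ring
  rw [hEq, abs_mul, abs_of_pos (by positivity : (0:ℝ) < 2/Real.sqrt 3)]
  have h7 : |2*t/Real.sqrt 3| = 2*t/Real.sqrt 3 := abs_of_pos (by positivity)
  calc 2/Real.sqrt 3 * |Real.arctan ((2*t-1)/Real.sqrt 3) - -(Real.pi/6)|
      ≤ 2/Real.sqrt 3 * (2*t/Real.sqrt 3) := by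
        apply mul_le_mul_of_nonneg_left _ (by positivity)
        rw [← h7]; exact key
    _ = 4 * t / 3 := by
        field_simp
        nlinarith

/-- Let `Φ` be as given. Then `Φ(x)/log x → 2π/(3√3)` as `x → +∞`,
and `Φ(x)/log x → −2π/(3√3)` as `x → 0⁺`. -/
theorem conifold_stmt3 (Φ Φ' Φ'' : ℝ → ℝ)
    (hΦ' : ∀ x ∈ Ioi (0:ℝ), HasDerivAt Φ (Φ' x) x)
    (hΦ'' : ∀ x ∈ Ioi (0:ℝ), HasDerivAt Φ' (Φ'' x) x)
    (hcont : ContinuousOn Φ'' (Ioi (0:ℝ)))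
    (hode : ∀ x ∈ Ioi (0:ℝ), x ^ 2 * Φ'' x + x * Φ' x = x / (1 - x + x ^ 2))
    (h1 : Φ 1 = 0) (h1' : Φ' 1 = 0) :
    Tendsto (fun x : ℝ => Φ x / Real.log x) atTop
      (𝓝 (2 * Real.pi / (3 * Real.sqrt 3))) ∧
    Tendsto (fun x : ℝ => Φ x / Real.log x) (𝓝[>] 0)
      (𝓝 (-(2 * Real.pi / (3 * Real.sqrt 3)))) := by
  set L : ℝ := 2 * Real.pi / (3 * Real.sqrt 3) with hL
  -- Step 1: x * Φ' x = ggfun x on Ioi 0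
  set F : ℝ → ℝ := fun x => x * Φ' x - ggfun x with hF_def
  have hFderiv : ∀ x ∈ Ioi (0:ℝ), HasDerivAt F 0 x := by
    intro x hx
    have hx0 : (0:ℝ) < x := hx
    have hq := qpos x
    have hmul : HasDerivAt (fun y => y * Φ' y) (1 * Φ' x + x * Φ'' x) x :=
      (hasDerivAt_id x).mul (hΦ'' x hx)
    have heq : 1 * Φ' x + x * Φ'' x = 1 / (1 - x + x ^ 2) := by
      have ho := hode x hx
      have ho' : (x ^ 2 * Φ'' x + x * Φ' x) * (1 - x + x ^ 2) = x := by
        rw [ho]; field_simp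
      have : x * (1 * Φ' x + x * Φ'' x) = x * (1 / (1 - x + x ^ 2)) := by
        rw [mul_one_div, eq_div_iff hq.ne']
        linear_combination ho'
      exact mul_left_cancel₀ hx0.ne' this
    have hmul2 : HasDerivAt (fun y => y * Φ' y) (1 / (1 - x + x ^ 2)) x := by
      rw [← heq]; exact hmul
    have h := hmul2.sub (gg_hasDeriv x)
    rw [sub_self] at h
    exact h
  have hkey : ∀ x ∈ Ioi (0:ℝ), x * Φ' x = ggfun x := by
    intro x hx
    have hx0 : (0:ℝ) < x := hx
    have hFcont : ∀ a b : ℝ, 0 < a → ContinuousOn F (Icc a b) := by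
      intro a b ha y hy
      exact (hFderiv y (lt_of_lt_of_le ha hy.1)).continuousAt.continuousWithinAt
    have hF1 : F 1 = 0 := by simp [hF_def, h1', gg_one]
    have hFx : F x = 0 := by
      rcases le_total 1 x with hx1 | hx1
      · have := constant_of_has_deriv_right_zero (hFcont 1 x one_pos)
          (fun y hy => ((hFderiv y (lt_of_lt_of_le one_pos hy.1)).hasDerivWithinAt))
        have hx' := this x ⟨hx1, le_refl x⟩
        rw [hF1] at hx'; exact hx'
      · have := constant_of_has_deriv_right_zero (hFcont x 1 hx0)
          (fun y hy => ((hFderiv y (lt_of_lt_of_le hx0 hy.1)).hasDerivWithinAt))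
        have h1' := this 1 ⟨hx1, le_refl 1⟩
        rw [hF1] at h1'; exact h1'.symm
    have : x * Φ' x - ggfun x = 0 := hFx
    linarith
  -- derivative of Φ' in terms of gg
  have hΦ'eq : ∀ x ∈ Ioi (0:ℝ), Φ' x = ggfun x / x := by
    intro x hx
    have hx0 : (0:ℝ) < x := hx
    field_simp
    rw [mul_comm]
    exact hkey x hx
  constructor
  · -- atTop
    -- ψ x = Φ x - L * log x has |ψ x| ≤ 2 for x ≥ 1
    have hψderiv : ∀ t ∈ Ioi (0:ℝ), HasDerivAt (fun y => Φ y - L * Real.log y)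
        ((ggfun t - L) / t) t := by
      intro t ht
      have ht0 : (0:ℝ) < t := ht
      have h := (hΦ' t ht).sub ((Real.hasDerivAt_log ht0.ne').const_mul L)
      have : Φ' t - L * t⁻¹ = (ggfun t - L) / t := by
        rw [hΦ'eq t ht]; field_simp
      rwa [this] at h
    have hbound : ∀ x : ℝ, 1 ≤ x → |Φ x - L * Real.log x| ≤ 2 := by
      intro x hx1
      have hsub : Icc (1:ℝ) x ⊆ Ioi 0 := fun y hy => lt_of_lt_of_le one_pos hy.1
      have hftc : (Φ x - L * Real.log x) - (Φ 1 - L * Real.log 1)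
          = ∫ t in (1:ℝ)..x, (ggfun t - L) / t := by
        rw [eq_comm]
        apply intervalIntegral.integral_eq_sub_of_hasDerivAt
        · intro t ht
          rw [uIcc_of_le hx1] at ht
          exact hψderiv t (hsub ht)
        · apply ContinuousOn.intervalIntegrable
          rw [uIcc_of_le hx1]
          apply ContinuousOn.div
          · exact (gg_cont.continuousOn.sub continuousOn_const)
          · exact continuousOn_id
          · intro t ht; exact (lt_of_lt_of_le one_pos ht.1).ne'
      have hcont1 : ContinuousOn (fun t => |(ggfun t - L) / t|) (uIcc 1 x) := by
        rw [uIcc_of_le hx1]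
        apply ContinuousOn.abs
        apply ContinuousOn.div
        · exact (gg_cont.continuousOn.sub continuousOn_const)
        · exact continuousOn_id
        · intro t ht; exact (lt_of_lt_of_le one_pos ht.1).ne'
      have hcont2 : ContinuousOn (fun t : ℝ => 2 / t ^ 2) (uIcc 1 x) := by
        rw [uIcc_of_le hx1]
        apply ContinuousOn.div continuousOn_const (by fun_prop)
        intro t ht
        have : (0:ℝ) < t := lt_of_lt_of_le one_pos ht.1
        positivity
      have hptwise : ∀ t ∈ Icc (1:ℝ) x, |(ggfun t - L) / t| ≤ 2 / t ^ 2 := by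
        intro t ht
        have ht1 : (1:ℝ) ≤ t := ht.1
        have ht0 : (0:ℝ) < t := lt_of_lt_of_le one_pos ht1
        have h1 := gg_le_L t
        have h2 := L_sub_gg_le t ht1
        rw [← hL] at h1 h2
        rw [abs_div, abs_of_pos ht0, abs_sub_comm, abs_of_nonneg (by linarith : 0 ≤ L - ggfun t)]
        calc (L - ggfun t) / t ≤ (2 / t) / t := by
              apply div_le_div_of_nonneg_right h2 ht0.le
          _ = 2 / t ^ 2 := by rw [div_div, pow_two]
      have hint2 : (∫ t in (1:ℝ)..x, 2 / t ^ 2) = 2 - 2 / x := by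
        have : ∀ t ∈ uIcc (1:ℝ) x, HasDerivAt (fun y : ℝ => -2 / y) (2 / t ^ 2) t := by
          intro t ht
          rw [uIcc_of_le hx1] at ht
          have ht0 : (0:ℝ) < t := lt_of_lt_of_le one_pos ht.1
          have h := ((hasDerivAt_inv ht0.ne').const_mul (-2 : ℝ))
          have heq : (-2 : ℝ) * (-(t ^ 2)⁻¹) = 2 / t ^ 2 := by field_simp
          have h2 : (fun y : ℝ => (-2) * y⁻¹) = (fun y : ℝ => -2 / y) := by
            funext y; field_simp
          rw [heq, h2] at h
          exact h
        rw [intervalIntegral.integral_eq_sub_of_hasDerivAt this (hcont2.intervalIntegrable)]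
        have hx0 : (0:ℝ) < x := lt_of_lt_of_le one_pos hx1
        field_simp
        ring
      rw [Real.log_one, mul_zero, sub_zero, h1, sub_zero] at hftc
      rw [hftc]
      calc |∫ t in (1:ℝ)..x, (ggfun t - L) / t|
          ≤ ∫ t in (1:ℝ)..x, |(ggfun t - L) / t| :=
            intervalIntegral.abs_integral_le_integral_abs hx1
        _ ≤ ∫ t in (1:ℝ)..x, 2 / t ^ 2 := by
            apply intervalIntegral.integral_mono_on hx1
              (hcont1.intervalIntegrable) (hcont2.intervalIntegrable) hptwise
        _ = 2 - 2 / x := hint2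
        _ ≤ 2 := by
            have hx0 : (0:ℝ) < x := lt_of_lt_of_le one_pos hx1
            have : 0 ≤ 2 / x := by positivity
            linarith
    -- squeeze
    have hz : Tendsto (fun x : ℝ => (Φ x - L * Real.log x) / Real.log x) atTop (𝓝 0) := by
      apply squeeze_zero_norm' (a := fun x : ℝ => 2 / Real.log x)
      · filter_upwards [eventually_ge_atTop (Real.exp 1)] with x hx
        have hx1 : (1:ℝ) ≤ x := le_trans (by nlinarith [Real.exp_one_gt_d9]) hx
        have hlog : (1:ℝ) ≤ Real.log x := by
          rw [← Real.log_exp 1]; exact Real.log_le_log (Real.exp_pos 1) hx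
        have hlogpos : (0:ℝ) < Real.log x := by linarith
        rw [Real.norm_eq_abs, abs_div, abs_of_pos hlogpos]
        gcongr
        exact hbound x hx1
      · exact Tendsto.div_atTop tendsto_const_nhds Real.tendsto_log_atTop
    have hev : (fun x : ℝ => L + (Φ x - L * Real.log x) / Real.log x)
        =ᶠ[atTop] (fun x : ℝ => Φ x / Real.log x) := by
      filter_upwards [eventually_gt_atTop (1:ℝ)] with x hx
      have hlog : Real.log x ≠ 0 := (Real.log_pos hx).ne'
      field_simp
      ring
    have hadd := (tendsto_const_nhds (x := L) (f := atTop)).add hz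
    rw [add_zero] at hadd
    exact Tendsto.congr' hev hadd
  · -- at 0+
    have hψderiv : ∀ t ∈ Ioi (0:ℝ), HasDerivAt (fun y => Φ y + L * Real.log y)
        ((ggfun t + L) / t) t := by
      intro t ht
      have ht0 : (0:ℝ) < t := ht
      have h := (hΦ' t ht).add ((Real.hasDerivAt_log ht0.ne').const_mul L)
      have : Φ' t + L * t⁻¹ = (ggfun t + L) / t := by
        rw [hΦ'eq t ht]; field_simp
      rwa [this] at h
    have hbound : ∀ x : ℝ, 0 < x → x ≤ 1 → |Φ x + L * Real.log x| ≤ 4/3 := by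
      intro x hx0 hx1
      have hftc : (Φ 1 + L * Real.log 1) - (Φ x + L * Real.log x)
          = ∫ t in x..(1:ℝ), (ggfun t + L) / t := by
        rw [eq_comm]
        apply intervalIntegral.integral_eq_sub_of_hasDerivAt
          (f := fun y => Φ y + L * Real.log y)
        · intro t ht
          rw [uIcc_of_le hx1] at ht
          exact hψderiv t (lt_of_lt_of_le hx0 ht.1)
        · apply ContinuousOn.intervalIntegrable
          rw [uIcc_of_le hx1]
          apply ContinuousOn.div
          · exact (gg_cont.continuousOn.add continuousOn_const)
          · exact continuousOn_id
          · intro t ht; exact (lt_of_lt_of_le hx0 ht.1).ne'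
      have hcont1 : ContinuousOn (fun t => |(ggfun t + L) / t|) (uIcc x 1) := by
        rw [uIcc_of_le hx1]
        apply ContinuousOn.abs
        apply ContinuousOn.div
        · exact (gg_cont.continuousOn.add continuousOn_const)
        · exact continuousOn_id
        · intro t ht; exact (lt_of_lt_of_le hx0 ht.1).ne'
      have hptwise : ∀ t ∈ Icc x 1, |(ggfun t + L) / t| ≤ 4/3 := by
        intro t ht
        have ht0 : (0:ℝ) < t := lt_of_lt_of_le hx0 ht.1
        have h := gg_add_L_abs t ht0
        rw [abs_div, abs_of_pos ht0, div_le_iff₀ ht0]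
        calc |ggfun t + L| ≤ 4 * t / 3 := h
          _ = 4/3 * t := by ring
      have habs : |∫ t in x..(1:ℝ), (ggfun t + L) / t| ≤ 4/3 := by
        calc |∫ t in x..(1:ℝ), (ggfun t + L) / t|
            ≤ ∫ t in x..(1:ℝ), |(ggfun t + L) / t| :=
              intervalIntegral.abs_integral_le_integral_abs hx1
          _ ≤ ∫ t in x..(1:ℝ), (4/3 : ℝ) := by
              apply intervalIntegral.integral_mono_on hx1
                (hcont1.intervalIntegrable) (intervalIntegrable_const) hptwise
          _ = 4/3 * (1 - x) := by
              rw [intervalIntegral.integral_const, smul_eq_mul]; ring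
          _ ≤ 4/3 := by nlinarith
      rw [Real.log_one, mul_zero, add_zero, h1, zero_sub] at hftc
      rw [← abs_neg, hftc]
      exact habs
    have hz : Tendsto (fun x : ℝ => (Φ x + L * Real.log x) / Real.log x) (𝓝[>] 0) (𝓝 0) := by
      apply squeeze_zero_norm' (a := fun x : ℝ => (4/3) / |Real.log x|)
      · filter_upwards [Ioo_mem_nhdsGT (by norm_num : (0:ℝ) < 1/2)] with x hx
        have hx0 : (0:ℝ) < x := hx.1
        have hx1 : x ≤ 1 := le_of_lt (lt_of_lt_of_le hx.2 (by norm_num))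
        have hlogneg : Real.log x < 0 := Real.log_neg hx0 (lt_of_lt_of_le hx.2 (by norm_num))
        have habspos : (0:ℝ) < |Real.log x| := abs_pos.mpr hlogneg.ne
        rw [Real.norm_eq_abs, abs_div]
        gcongr
        exact hbound x hx0 hx1
      · apply Tendsto.div_atTop tendsto_const_nhds
        exact tendsto_abs_atBot_atTop.comp Real.tendsto_log_nhdsGT_zero
    have hev : (fun x : ℝ => -L + (Φ x + L * Real.log x) / Real.log x)
        =ᶠ[𝓝[>] 0] (fun x : ℝ => Φ x / Real.log x) := by
      filter_upwards [Ioo_mem_nhdsGT (by norm_num : (0:ℝ) < 1/2)] with x hx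
      have hlog : Real.log x ≠ 0 := by
        have : Real.log x < 0 := Real.log_neg hx.1 (lt_of_lt_of_le hx.2 (by norm_num))
        exact this.ne
      field_simp
      ring
    have hadd := (tendsto_const_nhds (x := -L) (f := 𝓝[>] (0:ℝ))).add hz
    rw [add_zero] at hadd
    exact Tendsto.congr' hev hadd
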